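/- Let X₁, …, X_N be Banach spaces each with the c-Schur property (c ≥ 1), let Φ be a norm on ℝ^N with ‖·‖_∞ ≤ Φ ≤ ‖·‖_1, and let Y = X₁ × ⋯ × X_N be equipped with the norm ‖(x₁,…,x_N)‖ = Φ(‖x₁‖, …, ‖x_N‖). Then Y has the c-Schur property. -/

import Mathlib

open Filter Metric Topology

/-- The oscillation `ca(x_n) = inf_n diam {x_k : k ≥ n}` of a sequence. -/
noncomputable def ca {X : Type*} [PseudoMetricSpace X] (x : ℕ → X) : ℝ :=
  ⨅ n : ℕ, Metric.diam (x '' Set.Ici n)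

/-- `δ(x_n) = sup {ca(⟨x*, x_n⟩) : x* ∈ B_{X*}}`, the measure of weak non-Cauchyness. -/
noncomputable def delta {X : Type*} [NormedAddCommGroup X] [NormedSpace ℝ X] (x : ℕ → X) : ℝ :=
  sSup {r : ℝ | ∃ f : X →L[ℝ] ℝ, ‖f‖ ≤ 1 ∧ r = ca fun n => f (x n)}

private lemma ca_bddBelow {X : Type*} [PseudoMetricSpace X] (x : ℕ → X) :
    BddBelow (Set.range fun n => Metric.diam (x '' Set.Ici n)) :=
  ⟨0, by rintro r ⟨n, rfl⟩; exact Metric.diam_nonneg⟩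

private lemma ca_le_diam {X : Type*} [PseudoMetricSpace X] (x : ℕ → X) (n : ℕ) :
    ca x ≤ Metric.diam (x '' Set.Ici n) := ciInf_le (ca_bddBelow x) n

private lemma key {X : Type*} [NormedAddCommGroup X] [NormedSpace ℝ X]
    (c : ℝ) (hc : 1 ≤ c)
    (hX : ∀ u : ℕ → X, (∃ M, ∀ n, ‖u n‖ ≤ M) → ca u ≤ c * delta u)
    (u : ℕ → X) (M : ℝ) (hu : ∀ n, ‖u n‖ ≤ M)
    (A b : ℝ) (hb : 0 ≤ b)
    (hA : ∀ n : ℕ, ∃ j, n ≤ j ∧ A ≤ ‖u j‖)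
    (hbd : ∀ g : X →L[ℝ] ℝ, ‖g‖ ≤ 1 → ∃ n, ∀ j, n ≤ j → |g (u j)| ≤ b) :
    A ≤ c * b := by
  have hc0 : (0:ℝ) < c := lt_of_lt_of_le one_pos hc
  set w : ℕ → X := fun n => if n % 2 = 0 then u (n / 2) else -u (n / 2) with hw
  have hwnorm : ∀ n, ‖w n‖ ≤ M := by
    intro n; by_cases h : n % 2 = 0 <;> simp [hw, h, hu]
  have hbddset : ∀ n, Bornology.IsBounded (w '' Set.Ici n) := by
    intro n
    refine (Metric.isBounded_closedBall (x := (0:X)) (r := M)).subset ?_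
    rintro p ⟨m, _, rfl⟩
    simpa [Metric.mem_closedBall, dist_zero_right] using hwnorm m
  have h1 : 2 * A ≤ ca w := by
    apply le_ciInf; intro n
    obtain ⟨j, hj, hAj⟩ := hA n
    have e1 : w (2*j) = u j := by
      have h2 : (2*j) % 2 = 0 := by omega
      have h3 : (2*j) / 2 = j := by omega
      simp [hw, h2, h3]
    have e2 : w (2*j+1) = -u j := by
      have h2 : (2*j+1) % 2 = 1 := by omega
      have h3 : (2*j+1) / 2 = j := by omega
      simp [hw, h2, h3]
    have hmem1 : u j ∈ w '' Set.Ici n := ⟨2*j, Set.mem_Ici.mpr (by omega), e1⟩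
    have hmem2 : -u j ∈ w '' Set.Ici n := ⟨2*j+1, Set.mem_Ici.mpr (by omega), e2⟩
    have hd := Metric.dist_le_diam_of_mem (hbddset n) hmem1 hmem2
    have hdist : dist (u j) (-u j) = 2 * ‖u j‖ := by
      rw [dist_eq_norm, sub_neg_eq_add, ← two_smul ℝ, norm_smul]
      simp
    rw [hdist] at hd
    linarith
  have h2 : delta w ≤ 2 * b := by
    apply Real.sSup_le _ (by linarith)
    rintro r ⟨f, hf, rfl⟩
    obtain ⟨n₀, hn₀⟩ := hbd f hf
    have hca := ca_le_diam (fun n => f (w n)) (2*n₀)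
    refine hca.trans (Metric.diam_le_of_forall_dist_le (by linarith) ?_)
    have key1 : ∀ m, 2*n₀ ≤ m → |f (w m)| ≤ b := by
      intro m hm
      have hm2 : n₀ ≤ m / 2 := by omega
      by_cases h : m % 2 = 0 <;> simp [hw, h] <;>
        simpa using hn₀ _ hm2
    rintro p ⟨m, hm, rfl⟩ q ⟨m', hm', rfl⟩
    have h1' := key1 m hm
    have h2' := key1 m' hm'
    rw [Real.dist_eq]
    calc |f (w m) - f (w m')| ≤ |f (w m)| + |f (w m')| := by
          have := abs_add_le (f (w m)) (-(f (w m')))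
          simpa [sub_eq_add_neg, abs_neg] using this
      _ ≤ 2 * b := by linarith
  have h3 := hX w ⟨M, hwnorm⟩
  have h4 : c * delta w ≤ c * (2*b) := mul_le_mul_of_nonneg_left h2 hc0.le
  linarith

set_option maxHeartbeats 1000000

/-- If `X₁, …, X_N` have the `c`-Schur property (`c ≥ 1`), `Φ` is a norm on `ℝ^N` with
`‖·‖_∞ ≤ Φ ≤ ‖·‖_1`, and `Y = X₁ × ⋯ × X_N` carries the norm
`‖(x₁,…,x_N)‖ = Φ(‖x₁‖,…,‖x_N‖)`, then `Y` has the `c`-Schur property. -/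
theorem stmt10 {N : ℕ} (X : Fin N → Type*) [∀ i, NormedAddCommGroup (X i)]
    [∀ i, NormedSpace ℝ (X i)] [∀ i, CompleteSpace (X i)]
    (c : ℝ) (hc : 1 ≤ c)
    (hX : ∀ i, ∀ x : ℕ → X i, (∃ M : ℝ, ∀ n, ‖x n‖ ≤ M) → ca x ≤ c * delta x)
    (Φ : (Fin N → ℝ) → ℝ)
    (hΦadd : ∀ v w, Φ (v + w) ≤ Φ v + Φ w)
    (hΦsmul : ∀ (a : ℝ) (v), Φ (a • v) = |a| * Φ v)
    (hΦlow : ∀ v i, |v i| ≤ Φ v)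
    (hΦhigh : ∀ v, Φ v ≤ ∑ i, |v i|)
    {Y : Type*} [NormedAddCommGroup Y] [NormedSpace ℝ Y] [CompleteSpace Y]
    (e : Y ≃ₗ[ℝ] (∀ i, X i))
    (hY : ∀ y : Y, ‖y‖ = Φ fun i => ‖e y i‖)
    (y : ℕ → Y) (hy : ∃ M : ℝ, ∀ n, ‖y n‖ ≤ M) :
    ca y ≤ c * delta y := by
  classical
  have hc0 : (0:ℝ) < c := lt_of_lt_of_le one_pos hc
  obtain ⟨M, hM⟩ := hy
  have hM0 : 0 ≤ M := le_trans (norm_nonneg _) (hM 0)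
  -- Φ basics
  have hΦneg : ∀ v, Φ (-v) = Φ v := by
    intro v
    have := hΦsmul (-1) v
    simpa using this
  have hΦlip : ∀ v w', Φ v ≤ Φ w' + ∑ i, |v i - w' i| := by
    intro v w'
    have h1 : Φ v ≤ Φ w' + Φ (v - w') := by
      have := hΦadd w' (v - w')
      simpa using this
    have h2 := hΦhigh (v - w')
    simp only [Pi.sub_apply] at h2
    linarith
  -- delta facts
  have hsetbdd : BddAbove {r : ℝ | ∃ f : Y →L[ℝ] ℝ, ‖f‖ ≤ 1 ∧ r = ca fun n => f (y n)} := by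
    refine ⟨2*M, ?_⟩
    rintro r ⟨f, hf, rfl⟩
    refine (ca_le_diam _ 0).trans (Metric.diam_le_of_forall_dist_le (by linarith) ?_)
    rintro p ⟨m, _, rfl⟩ q ⟨m', _, rfl⟩
    have hb1 : |f (y m)| ≤ M := by
      have := f.le_opNorm (y m)
      have h2 : ‖f‖ * ‖y m‖ ≤ 1 * M :=
        mul_le_mul hf (hM m) (norm_nonneg _) zero_le_one
      simpa [Real.norm_eq_abs] using this.trans (by linarith)
    have hb2 : |f (y m')| ≤ M := by
      have := f.le_opNorm (y m')
      have h2 : ‖f‖ * ‖y m'‖ ≤ 1 * M :=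
        mul_le_mul hf (hM m') (norm_nonneg _) zero_le_one
      simpa [Real.norm_eq_abs] using this.trans (by linarith)
    rw [Real.dist_eq]
    calc |f (y m) - f (y m')| ≤ |f (y m)| + |f (y m')| := by
          have := abs_add_le (f (y m)) (-(f (y m')))
          simpa [sub_eq_add_neg, abs_neg] using this
      _ ≤ 2 * M := by linarith
  have hdmem : ∀ f : Y →L[ℝ] ℝ, ‖f‖ ≤ 1 → ca (fun n => f (y n)) ≤ delta y := by
    intro f hf
    exact le_csSup hsetbdd ⟨f, hf, rfl⟩
  have hd0 : 0 ≤ delta y := by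
    have hmem : (0:ℝ) ∈ {r : ℝ | ∃ f : Y →L[ℝ] ℝ, ‖f‖ ≤ 1 ∧ r = ca fun n => f (y n)} := by
      refine ⟨0, by simp, ?_⟩
      have himg : ∀ n : ℕ, ((fun n => (0 : Y →L[ℝ] ℝ) (y n)) '' Set.Ici n) = {(0:ℝ)} := by
        intro n
        simp [Set.Nonempty.image_const ⟨n, Set.self_mem_Ici⟩]
      unfold ca
      simp [himg]
    exact le_csSup hsetbdd hmem
  refine le_of_forall_pos_le_add ?_
  intro ε hε
  set ε₁ : ℝ := ε/4 with hε₁def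
  have hε₁ : 0 < ε₁ := by positivity
  -- step 1 : pairs
  have hstep1 : ∀ j : ℕ, ∃ kl : ℕ × ℕ, j ≤ kl.1 ∧ j ≤ kl.2 ∧ ca y - ε₁ ≤ ‖y kl.1 - y kl.2‖ := by
    intro j
    by_cases hcase : ca y - ε₁ ≤ 0
    · exact ⟨(j, j), le_refl _, le_refl _, by simpa using hcase⟩
    · by_contra hcon
      push_neg at hcon
      have hdle : Metric.diam (y '' Set.Ici j) ≤ ca y - ε₁ := by
        apply Metric.diam_le_of_forall_dist_le (le_of_lt (not_le.mp hcase))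
        rintro p ⟨m, hm, rfl⟩ q ⟨m', hm', rfl⟩
        rw [dist_eq_norm]
        exact le_of_lt (hcon (m, m') hm hm')
      have := ca_le_diam y j
      linarith
  choose kl hk hl hzl using hstep1
  set z : ℕ → Y := fun j => y (kl j).1 - y (kl j).2 with hzdef
  have hznorm : ∀ j, ‖z j‖ ≤ 2*M := by
    intro j
    calc ‖z j‖ ≤ ‖y (kl j).1‖ + ‖y (kl j).2‖ := norm_sub_le _ _
      _ ≤ 2*M := by linarith [hM (kl j).1, hM (kl j).2]
  set u : ∀ i : Fin N, ℕ → X i := fun i j => e (z j) i with hudef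
  have hunorm : ∀ (i : Fin N) (j : ℕ), ‖u i j‖ ≤ 2*M := by
    intro i j
    have h1 : |‖e (z j) i‖| ≤ Φ (fun i' => ‖e (z j) i'‖) := hΦlow (fun i' => ‖e (z j) i'‖) i
    rw [abs_of_nonneg (norm_nonneg _)] at h1
    calc ‖u i j‖ ≤ Φ (fun i' => ‖e (z j) i'‖) := h1
      _ = ‖z j‖ := (hY _).symm
      _ ≤ 2*M := hznorm j
  -- step 2 : subsequence with converging coordinate norms
  have hVmem : ∀ j, (fun i => ‖u i j‖) ∈ Metric.closedBall (0 : Fin N → ℝ) (2*M) := by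
    intro j
    rw [Metric.mem_closedBall, dist_zero_right]
    rw [pi_norm_le_iff_of_nonneg (by linarith)]
    intro i
    rw [Real.norm_eq_abs, abs_of_nonneg (norm_nonneg _)]
    exact hunorm i j
  obtain ⟨a, -, φ, hφ, hφconv⟩ :=
    (isCompact_closedBall (0 : Fin N → ℝ) (2*M)).tendsto_subseq hVmem
  have hconv : ∀ i, Tendsto (fun j => ‖u i (φ j)‖) atTop (𝓝 (a i)) := by
    intro i
    exact ((continuous_apply i).continuousAt.tendsto).comp hφconv
  have ha0 : ∀ i, 0 ≤ a i :=
    fun i => ge_of_tendsto (hconv i) (Eventually.of_forall fun j => norm_nonneg _)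
  have hatriv : ∀ i, (∀ x : X i, x = 0) → a i = 0 := by
    intro i hi
    have h1 : (fun j => ‖u i (φ j)‖) = fun _ => (0:ℝ) :=
      funext fun j => by rw [hi (u i (φ j)), norm_zero]
    have h2 := hconv i
    rw [h1] at h2
    exact (tendsto_nhds_unique h2 tendsto_const_nhds)
  -- ca y ≤ Φ a + 2 ε₁
  have hcaΦ : ca y ≤ Φ a + 2*ε₁ := by
    have hNpos : (0:ℝ) < (N:ℝ) + 1 := by positivity
    have hev : ∀ᶠ j in atTop, ∀ i, |‖u i (φ j)‖ - a i| ≤ ε₁/((N:ℝ)+1) := by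
      rw [eventually_all]
      intro i
      have hball := hconv i (Metric.ball_mem_nhds (a i) (ε := ε₁/((N:ℝ)+1)) (by positivity))
      filter_upwards [hball] with j hj
      have : dist ‖u i (φ j)‖ (a i) < ε₁/((N:ℝ)+1) := by
        simpa [Metric.mem_ball] using hj
      rw [Real.dist_eq] at this
      linarith
    obtain ⟨j₀, hj₀⟩ := hev.exists
    have h1 : ca y - ε₁ ≤ ‖z (φ j₀)‖ := hzl _
    have h2 : ‖z (φ j₀)‖ = Φ (fun i => ‖u i (φ j₀)‖) := hY _
    have h3 := hΦlip (fun i => ‖u i (φ j₀)‖) a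
    have h4 : ∑ i, |‖u i (φ j₀)‖ - a i| ≤ ∑ _i : Fin N, ε₁/((N:ℝ)+1) :=
      Finset.sum_le_sum fun i _ => hj₀ i
    have h5 : ∑ _i : Fin N, ε₁/((N:ℝ)+1) = (N:ℝ) * (ε₁/((N:ℝ)+1)) := by
      simp [Finset.sum_const, Finset.card_univ, mul_comm]
    have h6 : (N:ℝ) * (ε₁/((N:ℝ)+1)) ≤ ε₁ := by
      rw [mul_div_assoc', div_le_iff₀ hNpos]
      nlinarith
    linarith
  -- unit vectors
  have hwex : ∀ i : Fin N, ∃ w : X i, ‖w‖ ≤ 1 ∧ (‖w‖ = 1 ∨ ∀ x : X i, x = 0) := by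
    intro i
    by_cases hnt : ∀ x : X i, x = 0
    · exact ⟨0, by simp, Or.inr hnt⟩
    · push_neg at hnt
      obtain ⟨x, hx⟩ := hnt
      have hone : ‖‖x‖⁻¹ • x‖ = 1 := by
        rw [norm_smul, Real.norm_eq_abs, abs_inv, abs_of_nonneg (norm_nonneg x),
          inv_mul_cancel₀ (norm_ne_zero_iff.mpr hx)]
      exact ⟨‖x‖⁻¹ • x, le_of_eq hone, Or.inl hone⟩
  choose w hw1 hw2 using hwex
  set Wl : (Fin N → ℝ) →ₗ[ℝ] Y :=
    (e.symm : (∀ i, X i) →ₗ[ℝ] Y).comp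
      (LinearMap.pi (fun i => LinearMap.smulRight (LinearMap.proj i) (w i))) with hWldef
  have hWe : ∀ (v : Fin N → ℝ) (i : Fin N), e (Wl v) i = v i • w i := by
    intro v i
    simp [hWldef, LinearMap.pi_apply]
  have hWnorm : ∀ v, ‖Wl v‖ = Φ (fun i => |v i| * ‖w i‖) := by
    intro v
    rw [hY]
    congr 1
    funext i
    rw [hWe, norm_smul, Real.norm_eq_abs]
  have hρa : Φ (fun i => |a i| * ‖w i‖) = Φ a := by
    congr 1
    funext i
    rw [abs_of_nonneg (ha0 i)]
    rcases hw2 i with h | h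
    · rw [h, mul_one]
    · rw [hatriv i h]; simp
  by_cases hWa : Wl a = 0
  · have hΦa0 : Φ a = 0 := by rw [← hρa, ← hWnorm, hWa, norm_zero]
    have hcd : 0 ≤ c * delta y := mul_nonneg hc0.le hd0
    have : ca y ≤ 2*ε₁ := by linarith
    rw [hε₁def] at this
    linarith
  obtain ⟨G, hG1, hGa⟩ := exists_dual_vector ℝ (Wl a) (norm_ne_zero_iff.mpr hWa)
  have hGa' : G (Wl a) = ‖Wl a‖ := by exact_mod_cast hGa
  set lam : Fin N → ℝ := fun i => G (Wl (Pi.single i 1)) with hlamdef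
  have hLsum : ∀ v : Fin N → ℝ, G (Wl v) = ∑ i, v i * lam i := by
    intro v
    have h1' : ∀ i : Fin N, v i • (Pi.single i (1:ℝ) : Fin N → ℝ) = Pi.single i (v i) := by
      intro i
      rw [← Pi.single_smul, smul_eq_mul, mul_one]
    have hv : ∑ i, v i • (Pi.single i (1:ℝ) : Fin N → ℝ) = v := by
      rw [Finset.sum_congr rfl fun i _ => h1' i]
      exact Finset.univ_sum_single v
    conv_lhs => rw [← hv]
    rw [map_sum, map_sum]
    congr 1
    funext i
    rw [map_smul, map_smul, smul_eq_mul]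
  have hlam_bound : ∀ v : Fin N → ℝ, |∑ i, v i * lam i| ≤ Φ (fun i => |v i| * ‖w i‖) := by
    intro v
    rw [← hLsum]
    calc |G (Wl v)| ≤ ‖G‖ * ‖Wl v‖ := by
          have := G.le_opNorm (Wl v)
          simpa [Real.norm_eq_abs] using this
      _ = Φ (fun i => |v i| * ‖w i‖) := by rw [hG1, one_mul, hWnorm]
  have hlam_le1 : ∀ i, |lam i| ≤ 1 := by
    intro i
    have hb := hlam_bound (Pi.single i (1:ℝ) : Fin N → ℝ)
    have hL : ∑ j, (Pi.single i (1:ℝ) : Fin N → ℝ) j * lam j = lam i := by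
      rw [Finset.sum_eq_single i]
      · simp
      · intro j _ hj
        simp [Pi.single_apply, hj]
      · simp
    have hR : Φ (fun j => |(Pi.single i (1:ℝ) : Fin N → ℝ) j| * ‖w j‖) ≤ 1 := by
      refine (hΦhigh _).trans ?_
      have : ∀ j, |(|(Pi.single i (1:ℝ) : Fin N → ℝ) j| * ‖w j‖)| = |(Pi.single i (1:ℝ) : Fin N → ℝ) j| * ‖w j‖ := by
        intro j; rw [abs_of_nonneg (mul_nonneg (abs_nonneg _) (norm_nonneg _))]
      rw [Finset.sum_congr rfl fun j _ => this j]
      rw [Finset.sum_eq_single i]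
      · simpa using hw1 i
      · intro j _ hj
        simp [Pi.single_apply, hj]
      · simp
    rw [hL] at hb
    exact hb.trans hR
  have hSlam : ∑ i, |lam i| ≤ (N:ℝ) := by
    calc ∑ i, |lam i| ≤ ∑ _i : Fin N, (1:ℝ) := Finset.sum_le_sum fun i _ => hlam_le1 i
      _ = (N:ℝ) := by simp
  have hLa : ∑ i, a i * lam i = Φ a := by
    rw [← hLsum, hGa', hWnorm, hρa]
  -- step 3
  set ε₂ : ℝ := ε / (2 * c * ((N:ℝ)+1)) with hε₂def
  have hε₂ : 0 < ε₂ := by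
    apply div_pos hε
    positivity
  have claim : ∀ (i₀ : Fin N) (ψ : ℕ → ℕ), StrictMono ψ →
      ∃ g₀ : X i₀ →L[ℝ] ℝ, ‖g₀‖ ≤ 1 ∧ ∃ ρ : ℕ → ℕ, StrictMono ρ ∧
        ∀ t, (a i₀ - ε₂)/c ≤ g₀ (u i₀ (φ (ψ (ρ t)))) := by
    intro i₀ ψ hψmono
    by_cases hbneg : a i₀ - ε₂ ≤ 0
    · refine ⟨0, ?_, id, strictMono_id, fun t => ?_⟩
      · simp
      · have : (a i₀ - ε₂)/c ≤ 0 := div_nonpos_of_nonpos_of_nonneg hbneg hc0.le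
        simpa using this
    · push_neg at hbneg
      set b := (a i₀ - ε₂)/c with hbdef
      have hb0 : 0 < b := div_pos hbneg hc0
      have hconv' : Tendsto (fun t => ‖u i₀ (φ (ψ t))‖) atTop (𝓝 (a i₀)) := by
        have := (hconv i₀).comp (hψmono.tendsto_atTop)
        exact this
      have hexists : ∃ g₀ : X i₀ →L[ℝ] ℝ, ‖g₀‖ ≤ 1 ∧
          ∃ᶠ t in atTop, b ≤ |g₀ (u i₀ (φ (ψ t)))| := by
        by_contra hcon
        push_neg at hcon
        have hcon' : ∀ g₀ : X i₀ →L[ℝ] ℝ, ‖g₀‖ ≤ 1 →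
            ∀ᶠ t in atTop, |g₀ (u i₀ (φ (ψ t)))| < b := by
          intro g₀ hg₀
          have h := hcon g₀ hg₀
          exact h
        have hA : ∀ n : ℕ, ∃ j, n ≤ j ∧ a i₀ - ε₂/2 ≤ ‖u i₀ (φ (ψ j))‖ := by
          intro n
          have hev : ∀ᶠ t in atTop, a i₀ - ε₂/2 ≤ ‖u i₀ (φ (ψ t))‖ := by
            have hball := hconv' (Metric.ball_mem_nhds (a i₀) (ε := ε₂/2) (half_pos hε₂))
            filter_upwards [hball] with t ht
            have : dist ‖u i₀ (φ (ψ t))‖ (a i₀) < ε₂/2 := by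
              simpa [Metric.mem_ball] using ht
            rw [Real.dist_eq] at this
            have := abs_lt.mp this
            linarith [this.1, this.2]
          obtain ⟨j, hj1, hj2⟩ := (hev.and (eventually_ge_atTop n)).exists
          exact ⟨j, hj2, hj1⟩
        have hbd : ∀ g : X i₀ →L[ℝ] ℝ, ‖g‖ ≤ 1 →
            ∃ n, ∀ j, n ≤ j → |g (u i₀ (φ (ψ j)))| ≤ b := by
          intro g hg1
          obtain ⟨n, hn⟩ := (eventually_atTop).mp (hcon' g hg1)
          exact ⟨n, fun j hj => (hn j hj).le⟩
        have hkey := key c hc (hX i₀) (fun t => u i₀ (φ (ψ t))) (2*M)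
          (fun t => hunorm _ _) (a i₀ - ε₂/2) b hb0.le hA hbd
        rw [hbdef, mul_div_cancel₀ _ (ne_of_gt hc0)] at hkey
        linarith
      obtain ⟨g₀, hg₀1, hfreq⟩ := hexists
      have hsplit : (∃ᶠ t in atTop, b ≤ g₀ (u i₀ (φ (ψ t)))) ∨
          (∃ᶠ t in atTop, b ≤ -g₀ (u i₀ (φ (ψ t)))) := by
        apply Filter.frequently_or_distrib.mp
        exact hfreq.mono fun t ht => le_abs.mp ht
      rcases hsplit with hf | hf
      · obtain ⟨ρ, hρ, hρ2⟩ := Filter.extraction_of_frequently_atTop hf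
        exact ⟨g₀, hg₀1, ρ, hρ, fun t => hρ2 t⟩
      · obtain ⟨ρ, hρ, hρ2⟩ := Filter.extraction_of_frequently_atTop hf
        refine ⟨-g₀, by rwa [norm_neg], ρ, hρ, fun t => ?_⟩
        simpa using hρ2 t
  have step3' : ∀ s : Finset (Fin N), ∃ ψ : ℕ → ℕ, StrictMono ψ ∧
      ∃ g : ∀ i, X i →L[ℝ] ℝ, ∀ i ∈ s, ‖g i‖ ≤ 1 ∧
        ∀ t, (a i - ε₂)/c ≤ g i (u i (φ (ψ t))) := by
    intro s
    induction s using Finset.induction_on with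
    | empty =>
      exact ⟨id, strictMono_id, fun i => 0, fun i hi => absurd hi (Finset.notMem_empty i)⟩
    | @insert i₀ s hi₀ ih =>
      obtain ⟨ψ, hψ, g, hg⟩ := ih
      obtain ⟨g₀, hg₀, ρ, hρ, hval⟩ := claim i₀ ψ hψ
      refine ⟨ψ ∘ ρ, hψ.comp hρ, Function.update g i₀ g₀, ?_⟩
      intro i hi
      rcases Finset.mem_insert.mp hi with rfl | hi'
      · rw [Function.update_self]
        exact ⟨hg₀, fun t => hval t⟩
      · have hne : i ≠ i₀ := fun hh => hi₀ (hh ▸ hi')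
        rw [Function.update_of_ne hne]
        exact ⟨(hg i hi').1, fun t => (hg i hi').2 (ρ t)⟩
  obtain ⟨ψ, hψ, g, hg'⟩ := step3' Finset.univ
  have hg : ∀ i, ‖g i‖ ≤ 1 ∧ ∀ t, (a i - ε₂)/c ≤ g i (u i (φ (ψ t))) :=
    fun i => hg' i (Finset.mem_univ i)
  -- construct functional F
  set h : ∀ i, X i →L[ℝ] ℝ := fun i => if lam i < 0 then -g i else g i with hhdef
  have hhnorm : ∀ i, ‖h i‖ ≤ 1 := by
    intro i
    by_cases hli : lam i < 0 <;> simp [hhdef, hli, norm_neg, (hg i).1]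
  set F₀ : Y →ₗ[ℝ] ℝ := ∑ i, lam i •
    ((h i).toLinearMap.comp ((LinearMap.proj i).comp (e : Y →ₗ[ℝ] ∀ i, X i))) with hF₀def
  have hF₀ : ∀ y' : Y, F₀ y' = ∑ i, lam i * h i (e y' i) := by
    intro y'
    rw [hF₀def]
    simp [LinearMap.sum_apply, LinearMap.smul_apply, LinearMap.comp_apply, smul_eq_mul]
  have hF₀bound : ∀ y' : Y, |F₀ y'| ≤ ‖y'‖ := by
    intro y'
    set v : Fin N → ℝ := fun i => if lam i < 0 then -‖e y' i‖ else ‖e y' i‖ with hvdef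
    have h1 : |F₀ y'| ≤ ∑ i, |lam i| * ‖e y' i‖ := by
      rw [hF₀ y']
      refine (Finset.abs_sum_le_sum_abs _ _).trans ?_
      refine Finset.sum_le_sum fun i _ => ?_
      rw [abs_mul]
      refine mul_le_mul_of_nonneg_left ?_ (abs_nonneg _)
      have h2 : ‖h i ((e y') i)‖ ≤ ‖h i‖ * ‖(e y') i‖ := (h i).le_opNorm _
      have h3 : ‖h i‖ * ‖(e y') i‖ ≤ 1 * ‖(e y') i‖ :=
        mul_le_mul_of_nonneg_right (hhnorm i) (norm_nonneg _)
      rw [one_mul] at h3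
      calc |h i ((e y') i)| = ‖h i ((e y') i)‖ := (Real.norm_eq_abs _).symm
        _ ≤ ‖(e y') i‖ := h2.trans h3
    have h2 : ∑ i, |lam i| * ‖e y' i‖ = ∑ i, v i * lam i := by
      refine Finset.sum_congr rfl fun i _ => ?_
      by_cases hli : lam i < 0
      · rw [hvdef]; simp only [if_pos hli]
        rw [abs_of_neg hli]; ring
      · rw [hvdef]; simp only [if_neg hli]
        rw [abs_of_nonneg (not_lt.mp hli)]; ring
    have h3 := hlam_bound v
    have h4 : (fun i => |v i| * ‖w i‖) = fun i => ‖e y' i‖ := by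
      funext i
      have habs : |v i| = ‖e y' i‖ := by
        by_cases hli : lam i < 0 <;>
          simp [hvdef, hli, abs_of_nonneg (norm_nonneg ((e y') i))]
      rw [habs]
      rcases hw2 i with hwi | hwi
      · rw [hwi, mul_one]
      · rw [hwi ((e y') i), norm_zero, zero_mul]
    rw [h4] at h3
    have h5 : ∑ i, v i * lam i ≤ |∑ i, v i * lam i| := le_abs_self _
    rw [hY y']
    linarith
  set F : Y →L[ℝ] ℝ := F₀.mkContinuous 1 (fun y' => by
    simpa [Real.norm_eq_abs] using hF₀bound y') with hFdef
  have hFapp : ∀ y' : Y, F y' = F₀ y' := fun y' => rfl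
  have hFnorm : ‖F‖ ≤ 1 := LinearMap.mkContinuous_norm_le F₀ zero_le_one _
  have hFd : ca (fun n => F (y n)) ≤ delta y := hdmem F hFnorm
  -- lower bound on ca (F ∘ y)
  have hlow : Φ a / c - ε₂ * N ≤ ca (fun n => F (y n)) := by
    apply le_ciInf
    intro n
    set j := φ (ψ n) with hjdef
    have hjn : n ≤ j := le_trans (hψ.le_apply) (by rw [hjdef]; exact hφ.le_apply)
    have hk' : n ≤ (kl j).1 := le_trans hjn (hk j)
    have hl' : n ≤ (kl j).2 := le_trans hjn (hl j)
    have hmem1 : F (y (kl j).1) ∈ (fun n => F (y n)) '' Set.Ici n :=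
      ⟨(kl j).1, Set.mem_Ici.mpr hk', rfl⟩
    have hmem2 : F (y (kl j).2) ∈ (fun n => F (y n)) '' Set.Ici n :=
      ⟨(kl j).2, Set.mem_Ici.mpr hl', rfl⟩
    have hbdd : Bornology.IsBounded ((fun n => F (y n)) '' Set.Ici n) := by
      refine (Metric.isBounded_closedBall (x := (0:ℝ)) (r := M)).subset ?_
      rintro p ⟨m, _, rfl⟩
      rw [Metric.mem_closedBall, dist_zero_right, Real.norm_eq_abs]
      have h2 := F.le_opNorm (y m)
      have h3 : ‖F‖ * ‖y m‖ ≤ 1 * M := mul_le_mul hFnorm (hM m) (norm_nonneg _) zero_le_one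
      rw [one_mul] at h3
      calc |F (y m)| = ‖F (y m)‖ := (Real.norm_eq_abs _).symm
        _ ≤ M := h2.trans h3
    have hdist := Metric.dist_le_diam_of_mem hbdd hmem1 hmem2
    have hFz : F (y (kl j).1) - F (y (kl j).2) = ∑ i, lam i * h i (u i j) := by
      rw [← map_sub]
      have : y (kl j).1 - y (kl j).2 = z j := rfl
      rw [this, hFapp, hF₀]
    have hterm : ∀ i, |lam i| * ((a i - ε₂)/c) ≤ lam i * h i (u i j) := by
      intro i
      have hgi := (hg i).2 n
      by_cases hli : lam i < 0
      · have he : lam i * h i (u i j) = (-lam i) * g i (u i j) := by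
          rw [hhdef]
          simp only [if_pos hli, ContinuousLinearMap.neg_apply]
          ring
        rw [he, abs_of_neg hli]
        exact mul_le_mul_of_nonneg_left hgi (by linarith)
      · have he : lam i * h i (u i j) = lam i * g i (u i j) := by
          rw [hhdef]; simp only [if_neg hli]
        rw [he, abs_of_nonneg (not_lt.mp hli)]
        exact mul_le_mul_of_nonneg_left hgi (not_lt.mp hli)
    have hsum1 : ∑ i, |lam i| * ((a i - ε₂)/c) ≤ ∑ i, lam i * h i (u i j) :=
      Finset.sum_le_sum fun i _ => hterm i
    have hsum2 : Φ a / c - ε₂ * N ≤ ∑ i, |lam i| * ((a i - ε₂)/c) := by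
      have he1 : ∑ i, |lam i| * ((a i - ε₂)/c) =
          (∑ i, |lam i| * a i)/c - (∑ i, |lam i|) * ε₂ / c := by
        rw [Finset.sum_div, Finset.sum_mul, Finset.sum_div, ← Finset.sum_sub_distrib]
        refine Finset.sum_congr rfl fun i _ => ?_
        field_simp
      have he2 : Φ a ≤ ∑ i, |lam i| * a i := by
        rw [← hLa]
        refine Finset.sum_le_sum fun i _ => ?_
        rw [mul_comm (a i) (lam i)]
        exact mul_le_mul_of_nonneg_right (le_abs_self _) (ha0 i)
      have he3 : (∑ i, |lam i|) * ε₂ / c ≤ (N:ℝ) * ε₂ / c := by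
        gcongr
      have he4 : Φ a / c ≤ (∑ i, |lam i| * a i)/c := by
        have := mul_le_mul_of_nonneg_right he2 (inv_nonneg.mpr hc0.le)
        simpa [div_eq_mul_inv] using this
      have he5 : (N:ℝ) * ε₂ / c ≤ (N:ℝ) * ε₂ := div_le_self (by positivity) hc
      rw [he1]
      have he6 : ε₂ * (N:ℝ) = (N:ℝ) * ε₂ := mul_comm _ _
      linarith
    have h6 : Φ a / c - ε₂ * N ≤ F (y (kl j).1) - F (y (kl j).2) := by
      rw [hFz]
      linarith
    have h7 : F (y (kl j).1) - F (y (kl j).2) ≤ dist (F (y (kl j).1)) (F (y (kl j).2)) := by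
      rw [Real.dist_eq]
      exact le_abs_self _
    linarith
  -- conclusion
  have h8 : Φ a / c ≤ delta y + ε₂ * N := by linarith [hlow.trans hFd]
  have h9 : Φ a ≤ c * (delta y + ε₂ * N) := by
    have hmul := mul_le_mul_of_nonneg_left h8 hc0.le
    have hccancel : c * (Φ a / c) = Φ a := by field_simp
    rwa [hccancel] at hmul
  have h10 : c * (ε₂ * (N:ℝ)) ≤ ε/2 := by
    have hNpos : (0:ℝ) < (N:ℝ)+1 := by positivity
    have heq : c * (ε / (2*c*((N:ℝ)+1)) * N) = ε * N / (2*((N:ℝ)+1)) := by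
      field_simp
    rw [hε₂def, heq, div_le_iff₀ (by positivity)]
    nlinarith
  rw [hε₁def] at hcaΦ
  have h11 : c * (delta y + ε₂ * N) = c * delta y + c * (ε₂ * (N:ℝ)) := by ring
  rw [h11] at h9
  linarith
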